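/- Let α ∈ (0,1/2) be irrational, and let u, v be (semi)standard words of slope α with |u| > |v|. If u is a prefix of some power of v, then u = s_{k,ℓ} and v = s_{k−1} for some k ≥ 2 with 0 < ℓ ≤ a_k. -/

import Mathlib

/-- The Gauss-map iterates of `α`: `cfX α 0 = α`, `cfX α (n+1) = 1/{cfX α n}`. -/
noncomputable def cfX (α : ℝ) : ℕ → ℝ
  | 0 => α
  | n + 1 => (Int.fract (cfX α n))⁻¹

/-- The partial quotients of the continued fraction expansion of `α`. -/
noncomputable def cfA (α : ℝ) (n : ℕ) : ℤ := ⌊cfX α n⌋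

/-- The denominators of the convergents of `α`: `q₀ = 1`, `q₁ = a₁`,
`q_k = a_k q_{k-1} + q_{k-2}`. -/
noncomputable def cfQ (α : ℝ) : ℕ → ℤ
  | 0 => 1
  | 1 => cfA α 1
  | n + 2 => cfA α (n + 2) * cfQ α (n + 1) + cfQ α n

/-- `‖x‖ = min({x}, 1 - {x})`, the distance from `x` to the nearest integer. -/
noncomputable def dni (x : ℝ) : ℝ := min (Int.fract x) (1 - Int.fract x)


/-- The standard words of slope `α = [0; a₁, a₂, …]` (with `a₁ ≥ 2`):
`s₀ = 0`, `s₁ = 0^{a₁−1}1`, `s_k = s_{k−1}^{a_k} s_{k−2}`. -/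
noncomputable def stdW (α : ℝ) : ℕ → List Bool
  | 0 => [false]
  | 1 => List.replicate ((cfA α 1).toNat - 1) false ++ [true]
  | k + 2 => List.flatten (List.replicate ((cfA α (k + 2)).toNat) (stdW α (k + 1))) ++ stdW α k

/-- `w` is a standard or semistandard word of slope `α`
(`s_{k,ℓ} = s_{k−1}^ℓ s_{k−2}` for `k ≥ 2`, `0 < ℓ < a_k`). -/
def SStd (α : ℝ) (w : List Bool) : Prop :=
  (∃ k : ℕ, w = stdW α k) ∨
  (∃ k ℓ : ℕ, 2 ≤ k ∧ 0 < ℓ ∧ (ℓ : ℤ) < cfA α k ∧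
    w = List.flatten (List.replicate ℓ (stdW α (k - 1))) ++ stdW α (k - 2))

/-- `exch` exchanges the first two letters of a word. -/
def exch : List Bool → List Bool
  | x :: y :: t => y :: x :: t
  | l => l



/-!
Every (semi)standard word is a prefix of some `s_K`, and the `s_K` form a prefix chain, so any two
(semi)standard words are prefix-comparable. Moreover `s_{j+1} s_j` and `s_j s_{j+1}` differ exactly
in their last two letters. Now let `u` be a prefix of a power of `v`. If `v = s_{j+1}^m s_j` with
`m < a_{j+2}`, then `u`, being longer than `v`, starts with `s_{j+1}^{m+1} s_j`; comparing this
with `v² = s_{j+1}^m s_j s_{j+1}^m s_j` and cancelling `s_{j+1}^m` forces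
`s_{j+1} s_j = s_j s_{j+1}`.
If `v = s_{i+1}` and `u` is not of the form `s_{i+1}^ℓ s_i`, then `u` starts with `s_{i+2} s_{i+1}`,
and cancelling `s_{i+1}^{a_{i+2}}` against a power of `s_{i+1}` forces `s_i s_{i+1} = s_{i+1} s_i`.
Finally `v = s_0 = 0` is impossible because every longer (semi)standard word contains a `1`.
-/

namespace List

variable {β : Type*}

def wpow (w : List β) (n : ℕ) : List β := (replicate n w).flatten

@[simp] lemma wpow_zero (w : List β) : wpow w 0 = [] := rfl

lemma wpow_succ (w : List β) (n : ℕ) : wpow w (n + 1) = w ++ wpow w n := rfl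

@[simp] lemma wpow_one (w : List β) : wpow w 1 = w := by simp [wpow]

lemma wpow_add (w : List β) (m n : ℕ) : wpow w (m + n) = wpow w m ++ wpow w n := by
  simp only [wpow, replicate_add, flatten_append]

lemma append_wpow_comm (w : List β) (n : ℕ) : w ++ wpow w n = wpow w n ++ w := by
  rw [← wpow_succ, wpow_add, wpow_one]

@[simp] lemma length_wpow (w : List β) (n : ℕ) : (wpow w n).length = n * w.length := by
  induction n with
  | zero => simp
  | succ n ih => rw [wpow_succ, length_append, ih]; ring

lemma wpow_prefix_wpow (w : List β) {m n : ℕ} (h : m ≤ n) : wpow w m <+: wpow w n :=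
  ⟨wpow w (n - m), by rw [← wpow_add, Nat.add_sub_cancel' h]⟩

lemma prefix_wpow (w : List β) {n : ℕ} (hn : 1 ≤ n) : w <+: wpow w n := by
  simpa using wpow_prefix_wpow w hn

lemma not_append_prefix_append {x y X : List β} (hxy : x ++ y ≠ y ++ x) (hy : y <+: X) :
    ¬ y ++ x <+: x ++ X := fun h =>
  hxy <| (prefix_of_prefix_length_le ((prefix_append_right_inj x).2 hy) h
    (by simp [Nat.add_comm])).eq_of_length (by simp [Nat.add_comm])

end List

open List

variable {α : ℝ}

/-- `semistd α j ℓ = s_{j+1}^ℓ s_j` is the paper's `s_{j+2,ℓ}`. -/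
noncomputable def semistd (α : ℝ) (j ℓ : ℕ) : List Bool :=
  wpow (stdW α (j + 1)) ℓ ++ stdW α j

lemma stdW_add_two (j : ℕ) : stdW α (j + 2) = semistd α j (cfA α (j + 2)).toNat := rfl

lemma length_semistd (j ℓ : ℕ) :
    (semistd α j ℓ).length = ℓ * (stdW α (j + 1)).length + (stdW α j).length := by
  simp [semistd]

lemma length_stdW_pos : ∀ k, 0 < (stdW α k).length
  | 0 => by simp [stdW]
  | 1 => by simp [stdW]
  | k + 2 => by
    rw [stdW_add_two, length_semistd]
    exact Nat.add_pos_right _ (length_stdW_pos k)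

lemma length_semistd_le_stdW {j ℓ : ℕ} (h : ℓ ≤ (cfA α (j + 2)).toNat) :
    (semistd α j ℓ).length ≤ (stdW α (j + 2)).length := by
  rw [stdW_add_two, length_semistd, length_semistd]
  gcongr

lemma length_stdW_lt_length_semistd {j m : ℕ} (hm : 1 ≤ m) :
    (stdW α (j + 1)).length < (semistd α j m).length := by
  rw [length_semistd]
  have := length_stdW_pos (α := α) j
  have := Nat.le_mul_of_pos_left (stdW α (j + 1)).length hm
  omega

lemma stdW_append_swap : ∀ j, ∃ (p : List Bool) (x y : Bool), x ≠ y ∧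
    stdW α (j + 1) ++ stdW α j = p ++ [x, y] ∧ stdW α j ++ stdW α (j + 1) = p ++ [y, x]
  | 0 => ⟨replicate ((cfA α 1).toNat - 1) false, true, false, by simp, by simp [stdW],
      by
        show false :: (_ ++ [true]) = _
        rw [← cons_append, ← replicate_succ, replicate_succ', append_assoc]
        rfl⟩
  | j + 1 => by
    obtain ⟨p, x, y, hxy, h₁, h₂⟩ := stdW_append_swap j
    refine ⟨wpow (stdW α (j + 1)) (cfA α (j + 2)).toNat ++ p, y, x, hxy.symm, ?_, ?_⟩
    · rw [stdW_add_two, semistd, append_assoc, h₂, append_assoc]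
    · rw [stdW_add_two, semistd, ← append_assoc, append_wpow_comm, append_assoc, h₁,
        append_assoc]

lemma stdW_append_stdW_succ_ne (j : ℕ) :
    stdW α j ++ stdW α (j + 1) ≠ stdW α (j + 1) ++ stdW α j := by
  obtain ⟨p, x, y, hxy, h₁, h₂⟩ := stdW_append_swap (α := α) j
  rw [h₁, h₂]
  intro h
  obtain ⟨-, hyx⟩ : y = x ∧ x = y := by simpa using h
  exact hxy hyx

lemma semistd_succ_not_prefix_wpow {j m : ℕ} (hm : 1 ≤ m) (n : ℕ) :
    ¬ semistd α j (m + 1) <+: wpow (semistd α j m) n := by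
  intro h
  have h' := h.trans (wpow_prefix_wpow _ (show n ≤ 1 + (n + 1) by omega))
  rw [semistd, wpow_add, wpow_one, wpow_add, wpow_one, semistd, append_assoc, append_assoc,
    prefix_append_right_inj, ← semistd] at h'
  exact not_append_prefix_append (stdW_append_stdW_succ_ne j)
    (((prefix_wpow _ hm).trans (prefix_append _ _)).trans (prefix_wpow _ (by omega))) h'

lemma sStd_semistd {j ℓ : ℕ} (h₁ : 1 ≤ ℓ) (h₂ : ℓ ≤ (cfA α (j + 2)).toNat) :
    SStd α (semistd α j ℓ) := by
  obtain h₂ | rfl := h₂.lt_or_eq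
  · exact Or.inr ⟨j + 2, ℓ, le_add_self, h₁, by omega, rfl⟩
  · exact Or.inl ⟨j + 2, rfl⟩

section Quotients

variable (hA : ∀ n, 1 ≤ (cfA α (n + 1)).toNat)
include hA

lemma true_mem_stdW_succ : ∀ k, true ∈ stdW α (k + 1)
  | 0 => by simp [stdW]
  | k + 1 => mem_append_left _ ((prefix_wpow _ (hA (k + 1))).subset (true_mem_stdW_succ k))

lemma SStd.cases {w : List Bool} (hw : SStd α w) :
    w = stdW α 0 ∨ w = stdW α 1 ∨
      ∃ j ℓ, 1 ≤ ℓ ∧ ℓ ≤ (cfA α (j + 2)).toNat ∧ w = semistd α j ℓ := by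
  rcases hw with ⟨_ | _ | j, rfl⟩ | ⟨k, ℓ, hk, hℓ, hℓa, rfl⟩
  · exact Or.inl rfl
  · exact Or.inr (Or.inl rfl)
  · exact Or.inr (Or.inr ⟨j, _, hA (j + 1), le_rfl, rfl⟩)
  · obtain ⟨j, rfl⟩ := Nat.exists_eq_add_of_le' hk
    exact Or.inr (Or.inr ⟨j, ℓ, hℓ, by omega, rfl⟩)

lemma SStd.true_mem {w : List Bool} (hw : SStd α w) (hlen : 1 < w.length) : true ∈ w := by
  rcases hw.cases hA with rfl | rfl | ⟨j, ℓ, hℓ, -, rfl⟩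
  · simp [stdW] at hlen
  · exact true_mem_stdW_succ hA 0
  · exact mem_append_left _ ((prefix_wpow _ hℓ).subset (true_mem_stdW_succ hA j))

variable (hA1 : 2 ≤ (cfA α 1).toNat)
include hA1

lemma stdW_prefix_stdW_succ : ∀ k, stdW α k <+: stdW α (k + 1)
  | 0 => by
    obtain ⟨c, hc⟩ : ∃ c, (cfA α 1).toNat - 1 = c + 1 :=
      ⟨_, (Nat.succ_pred_eq_of_pos (by omega)).symm⟩
    show [false] <+: replicate _ false ++ [true]
    rw [hc]
    exact ⟨replicate c false ++ [true], rfl⟩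
  | k + 1 => (prefix_wpow _ (hA (k + 1))).trans (prefix_append _ _)

lemma stdW_prefix_stdW {j k : ℕ} (h : j ≤ k) : stdW α j <+: stdW α k := by
  induction k, h using Nat.le_induction with
  | base => exact prefix_refl _
  | succ k _ ih => exact ih.trans (stdW_prefix_stdW_succ hA hA1 k)

lemma strictMono_length_stdW : StrictMono fun k => (stdW α k).length := by
  refine strictMono_nat_of_lt_succ fun k => ?_
  match k with
  | 0 => simp [stdW]; omega
  | k + 1 =>
    rw [stdW_add_two, length_semistd]
    have := length_stdW_pos (α := α) k
    have := Nat.le_mul_of_pos_left (stdW α (k + 1)).length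
      (show 1 ≤ (cfA α (k + 2)).toNat from hA (k + 1))
    omega

lemma SStd.exists_prefix_stdW {w : List Bool} (hw : SStd α w) : ∃ K, w <+: stdW α K := by
  rcases hw.cases hA with rfl | rfl | ⟨j, ℓ, hℓ, hℓa, rfl⟩
  · exact ⟨0, prefix_refl _⟩
  · exact ⟨1, prefix_refl _⟩
  · refine ⟨j + 2, ?_⟩
    rw [stdW_add_two, ← Nat.add_sub_cancel' hℓa]
    simp only [semistd, wpow_add, append_assoc]
    refine (prefix_append_right_inj _).2 ?_
    rcases Nat.eq_zero_or_pos ((cfA α (j + 2)).toNat - ℓ) with h | h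
    · rw [h, wpow_zero, nil_append]
    · exact ((stdW_prefix_stdW_succ hA hA1 j).trans (prefix_wpow _ h)).trans (prefix_append _ _)

lemma SStd.prefix_of_length_le {u w : List Bool} (hu : SStd α u) (hw : SStd α w)
    (h : w.length ≤ u.length) : w <+: u := by
  obtain ⟨K, hK⟩ := hu.exists_prefix_stdW hA hA1
  obtain ⟨L, hL⟩ := hw.exists_prefix_stdW hA hA1
  exact prefix_of_prefix_length_le (hL.trans (stdW_prefix_stdW hA hA1 (le_max_right K L)))
    (hK.trans (stdW_prefix_stdW hA hA1 (le_max_left K L))) h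

lemma SStd.exists_eq_semistd_of_length_lt {u : List Bool} (hu : SStd α u) {j : ℕ}
    (hlen : (stdW α (j + 1)).length < u.length) :
    ∃ j' m, j ≤ j' ∧ 1 ≤ m ∧ m ≤ (cfA α (j' + 2)).toNat ∧ u = semistd α j' m := by
  have hmono := (strictMono_length_stdW hA hA1).monotone
  rcases hu.cases hA with rfl | rfl | ⟨j', m, hm, hma, rfl⟩
  · exact absurd (hmono (Nat.zero_le (j + 1))) hlen.not_ge
  · exact absurd (hmono (Nat.le_add_left 1 j)) hlen.not_ge
  · refine ⟨j', m, ?_, hm, hma, rfl⟩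
    by_contra! hj
    exact hlen.not_ge ((length_semistd_le_stdW hma).trans (hmono (by omega)))

lemma stdW_append_not_prefix_wpow (i n : ℕ) :
    ¬ stdW α (i + 2) ++ stdW α (i + 1) <+: wpow (stdW α (i + 1)) n := by
  intro h
  have h' := h.trans
    (wpow_prefix_wpow _ (show n ≤ (cfA α (i + 2)).toNat + (1 + (n + 1)) by omega))
  rw [wpow_add, wpow_add, wpow_one, stdW_add_two, semistd, append_assoc,
    prefix_append_right_inj] at h'
  exact not_append_prefix_append (stdW_append_stdW_succ_ne i).symm
    ((stdW_prefix_stdW_succ hA hA1 i).trans (prefix_wpow _ (by omega))) h'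

lemma SStd.eq_semistd_of_prefix_wpow_stdW {u : List Bool} (hu : SStd α u) {i n : ℕ}
    (hlen : (stdW α (i + 1)).length < u.length) (hpref : u <+: wpow (stdW α (i + 1)) n) :
    ∃ ℓ, 1 ≤ ℓ ∧ ℓ ≤ (cfA α (i + 2)).toNat ∧ u = semistd α i ℓ := by
  obtain ⟨j, m, hij, hm, hma, rfl⟩ := hu.exists_eq_semistd_of_length_lt hA hA1 hlen
  obtain rfl | hij := hij.eq_or_lt
  · exact ⟨m, hm, hma, rfl⟩
  have hw : SStd α (stdW α (i + 2) ++ stdW α (i + 1)) := by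
    simpa [semistd] using sStd_semistd (α := α) (j := i + 1) le_rfl (hA (i + 2))
  refine absurd ((hu.prefix_of_length_le hA hA1 hw ?_).trans hpref)
    (stdW_append_not_prefix_wpow hA hA1 i n)
  have hmono := (strictMono_length_stdW hA hA1).monotone
  have : (stdW α (i + 2)).length ≤ (stdW α (j + 1)).length := hmono (by omega)
  have : (stdW α (i + 1)).length ≤ (stdW α j).length := hmono (by omega)
  have := Nat.le_mul_of_pos_left (stdW α (j + 1)).length hm
  rw [length_append, length_semistd]
  omega

lemma SStd.not_prefix_wpow_semistd {u : List Bool} (hu : SStd α u) {j m : ℕ} (hm : 1 ≤ m)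
    (hma : m < (cfA α (j + 2)).toNat) (hlen : (semistd α j m).length < u.length) (n : ℕ) :
    ¬ u <+: wpow (semistd α j m) n := by
  refine fun hpref => semistd_succ_not_prefix_wpow hm n
    ((hu.prefix_of_length_le hA hA1 (sStd_semistd (by omega) hma) ?_).trans hpref)
  obtain ⟨j', m', hj, hm', hma', rfl⟩ := hu.exists_eq_semistd_of_length_lt hA hA1
    ((length_stdW_lt_length_semistd hm).trans hlen)
  obtain rfl | hj := hj.eq_or_lt
  · rw [length_semistd, length_semistd] at *
    have : m < m' := Nat.lt_of_mul_lt_mul_right (a := (stdW α (j + 1)).length) (by omega)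
    exact Nat.add_le_add_right (Nat.mul_le_mul_right _ this) _
  · calc (semistd α j (m + 1)).length ≤ (stdW α (j + 2)).length := length_semistd_le_stdW hma
      _ ≤ (stdW α (j' + 1)).length := (strictMono_length_stdW hA hA1).monotone (by omega)
      _ ≤ (semistd α j' m').length := (length_stdW_lt_length_semistd hm').le

end Quotients

lemma irrational_cfX (hα : Irrational α) : ∀ n, Irrational (cfX α n)
  | 0 => hα
  | n + 1 => ((irrational_cfX hα n).sub_intCast ⌊cfX α n⌋).inv

lemma one_le_cfA_succ (hα : Irrational α) (n : ℕ) : 1 ≤ (cfA α (n + 1)).toNat := by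
  have hfract : 0 < Int.fract (cfX α n) := Int.fract_pos.2 ((irrational_cfX hα n).ne_int _)
  have : (1 : ℝ) ≤ cfX α (n + 1) :=
    (one_lt_inv_iff₀.2 ⟨hfract, Int.fract_lt_one _⟩).le
  have : (1 : ℤ) ≤ cfA α (n + 1) := Int.le_floor.2 (by exact_mod_cast this)
  omega

lemma two_le_cfA_one (h0 : 0 < α) (h2 : α < 1 / 2) : 2 ≤ (cfA α 1).toNat := by
  have : (2 : ℝ) ≤ cfX α 1 := by
    rw [cfX, cfX, Int.fract_eq_self.2 ⟨h0.le, by linarith⟩, le_inv_comm₀ two_pos h0]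
    linarith
  have : (2 : ℤ) ≤ cfA α 1 := Int.le_floor.2 (by exact_mod_cast this)
  omega

/-- for irrational `α ∈ (0,1/2)`, if `u` and `v` are (semi)standard
words of slope `α` with `|u| > |v|` and `u` is a prefix of some power of `v`,
then `u = s_{k,ℓ} = s_{k−1}^ℓ s_{k−2}` and `v = s_{k−1}` for some `k ≥ 2`
and `0 < ℓ ≤ a_k`. -/
theorem standard_periods (α : ℝ) (hα : Irrational α) (h0 : 0 < α) (h2 : α < 1 / 2)
    (u v : List Bool) (hu : SStd α u) (hv : SStd α v)
    (hlen : v.length < u.length)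
    (hpref : ∃ n : ℕ, u <+: List.flatten (List.replicate n v)) :
    ∃ k ℓ : ℕ, 2 ≤ k ∧ 0 < ℓ ∧ (ℓ : ℤ) ≤ cfA α k ∧
      u = List.flatten (List.replicate ℓ (stdW α (k - 1))) ++ stdW α (k - 2) ∧
      v = stdW α (k - 1) := by
  obtain ⟨n, hpref⟩ := hpref
  have hA := one_le_cfA_succ hα
  have hA1 := two_le_cfA_one h0 h2
  suffices ∃ i, v = stdW α (i + 1) by
    obtain ⟨i, rfl⟩ := this
    obtain ⟨ℓ, hℓ, hℓa, rfl⟩ := hu.eq_semistd_of_prefix_wpow_stdW hA hA1 hlen hpref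
    exact ⟨i + 2, ℓ, le_add_self, hℓ, by omega, rfl, rfl⟩
  rcases hv.cases hA with rfl | rfl | ⟨j, m, hm, hma, rfl⟩
  · have := hpref.subset (hu.true_mem hA (by simpa [stdW] using hlen))
    simp [stdW] at this
  · exact ⟨0, rfl⟩
  · obtain hma | rfl := hma.lt_or_eq
    · exact absurd hpref (hu.not_prefix_wpow_semistd hA hA1 hm hma hlen n)
    · exact ⟨j + 1, rfl⟩
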